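/- If f : ℝ^n → ℝ is convex and differentiable with L-Lipschitz gradient and x* minimizes f, then the gradient descent iterates x_{k+1} = x_k − (1/L)∇f(x_k) satisfy f(x_k) − f(x*) ≤ L‖x_0 − x*‖²/(2k) for all k ≥ 1. -/

import Mathlib

/-!
By convexity and the descent lemma `f y ≤ f x + ⟪∇f x, y - x⟫ + L/2 ‖y - x‖²`, a gradient step
`x⁺ = x - ∇f x / L` satisfies `f x⁺ - f z ≤ L/2 (‖x - z‖² - ‖x⁺ - z‖²)` for every point `z`.
Summing over the first `k` steps telescopes the right-hand side, and since the values `f (x_k)`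
decrease, `k (f x_k - f z)` is at most the sum of the left-hand sides, hence at most
`L/2 ‖x₀ - z‖²`.
-/

open AffineMap Set
open scoped InnerProductSpace

variable {H : Type*} [NormedAddCommGroup H] [InnerProductSpace ℝ H] [CompleteSpace H]
  {f : H → ℝ} {L : ℝ}

theorem hasDerivAt_comp_lineMap {x y : H} {t : ℝ} (hf : DifferentiableAt ℝ f (lineMap x y t)) :
    HasDerivAt (fun s => f (lineMap x y s)) ⟪gradient f (lineMap x y t), y - x⟫_ℝ t := by
  rw [inner_gradient_left]
  exact hf.hasFDerivAt.comp_hasDerivAt t hasDerivAt_lineMap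

theorem ConvexOn.add_inner_gradient_le (hconv : ConvexOn ℝ univ f) {x : H}
    (hf : DifferentiableAt ℝ f x) (y : H) :
    f x + ⟪gradient f x, y - x⟫_ℝ ≤ f y := by
  have hline : ConvexOn ℝ univ (fun t => f (lineMap x y t)) := hconv.comp_affineMap (lineMap x y)
  have hderiv := hasDerivAt_comp_lineMap (t := 0) (y := y) (by simpa using hf)
  have := hline.le_slope_of_hasDerivAt (mem_univ 0) (mem_univ 1) zero_lt_one hderiv
  simp only [lineMap_apply_zero, slope_def_field, lineMap_apply_one] at this
  linarith

theorem le_add_inner_gradient_add_of_lipschitz_gradient (hf : Differentiable ℝ f)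
    (hlip : ∀ x y, ‖gradient f x - gradient f y‖ ≤ L * ‖x - y‖) (x y : H) :
    f y ≤ f x + ⟪gradient f x, y - x⟫_ℝ + L / 2 * ‖y - x‖ ^ 2 := by
  set v := y - x
  have hderiv (t : ℝ) := hasDerivAt_comp_lineMap (x := x) (y := y) (t := t) (hf _)
  have hquad (t : ℝ) :
      HasDerivAt (fun s => f x + s * ⟪gradient f x, v⟫_ℝ + L / 2 * s ^ 2 * ‖v‖ ^ 2)
        (⟪gradient f x, v⟫_ℝ + L * t * ‖v‖ ^ 2) t := by
    refine ((((hasDerivAt_id' t).mul_const ⟪gradient f x, v⟫_ℝ).const_add (f x)).add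
      (((hasDerivAt_pow 2 t).const_mul (L / 2)).mul_const (‖v‖ ^ 2))).congr_deriv ?_
    push_cast
    ring
  have hslope (t : ℝ) (ht : 0 ≤ t) :
      ⟪gradient f (lineMap x y t), v⟫_ℝ ≤ ⟪gradient f x, v⟫_ℝ + L * t * ‖v‖ ^ 2 := by
    have hdisp : lineMap x y t - x = t • v := lineMap_vsub_left x y t
    calc ⟪gradient f (lineMap x y t), v⟫_ℝ
        = ⟪gradient f x, v⟫_ℝ + ⟪gradient f (lineMap x y t) - gradient f x, v⟫_ℝ := by
          rw [inner_sub_left]; ring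
      _ ≤ ⟪gradient f x, v⟫_ℝ + ‖gradient f (lineMap x y t) - gradient f x‖ * ‖v‖ := by
          gcongr; exact real_inner_le_norm _ _
      _ ≤ ⟪gradient f x, v⟫_ℝ + L * ‖lineMap x y t - x‖ * ‖v‖ := by
          gcongr; exact hlip _ _
      _ = ⟪gradient f x, v⟫_ℝ + L * t * ‖v‖ ^ 2 := by
          rw [hdisp, norm_smul, Real.norm_of_nonneg ht]; ring
  have hle := image_le_of_deriv_right_le_deriv_boundary (a := 0) (b := 1)
    (fun t _ => (hderiv t).continuousAt.continuousWithinAt)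
    (fun t _ => (hderiv t).hasDerivWithinAt) (by simp)
    (fun t _ => (hquad t).continuousAt.continuousWithinAt)
    (fun t _ => (hquad t).hasDerivWithinAt)
    (fun t ht => hslope t ht.1) (right_mem_Icc.2 zero_le_one)
  simpa using hle

theorem Antitone.nat_mul_add_le_of_le_sub {a d : ℕ → ℝ} (ha : Antitone a)
    (h : ∀ k, a (k + 1) ≤ d k - d (k + 1)) (k : ℕ) : k * a k + d k ≤ d 0 := by
  induction k with
  | zero => simp
  | succ k ih =>
    have hmono : (k : ℝ) * a (k + 1) ≤ k * a k :=
      mul_le_mul_of_nonneg_left (ha k.le_succ) k.cast_nonneg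
    push_cast
    linarith [h k]

noncomputable def gradientStep (f : H → ℝ) (L : ℝ) (x : H) : H := x - (1 / L) • gradient f x

theorem apply_gradientStep_le_sub (hf : Differentiable ℝ f)
    (hlip : ∀ x y, ‖gradient f x - gradient f y‖ ≤ L * ‖x - y‖) (x : H) :
    f (gradientStep f L x) ≤ f x - ‖gradient f x‖ ^ 2 / (2 * L) := by
  have hdisp : gradientStep f L x - x = -((1 / L) • gradient f x) := by
    rw [gradientStep]; abel
  have h := le_add_inner_gradient_add_of_lipschitz_gradient hf hlip x (gradientStep f L x)
  rw [hdisp, inner_neg_right, real_inner_smul_right, real_inner_self_eq_norm_sq, norm_neg,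
    norm_smul, Real.norm_eq_abs] at h
  rcases eq_or_ne L 0 with rfl | hL
  -- `1 / 0 = 0`, so for `L = 0` the step does not move
  · simp [gradientStep]
  · convert h using 1
    rw [mul_pow, sq_abs]
    field_simp
    ring

theorem apply_gradientStep_le (hf : Differentiable ℝ f)
    (hlip : ∀ x y, ‖gradient f x - gradient f y‖ ≤ L * ‖x - y‖) (hL : 0 ≤ L) (x : H) :
    f (gradientStep f L x) ≤ f x := by
  have hdesc := apply_gradientStep_le_sub hf hlip x
  have hgain : 0 ≤ ‖gradient f x‖ ^ 2 / (2 * L) := by positivity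
  linarith

theorem apply_gradientStep_sub_le (hconv : ConvexOn ℝ univ f) (hf : Differentiable ℝ f)
    (hlip : ∀ x y, ‖gradient f x - gradient f y‖ ≤ L * ‖x - y‖) (hL : L ≠ 0) (x z : H) :
    f (gradientStep f L x) - f z ≤ L / 2 * (‖x - z‖ ^ 2 - ‖gradientStep f L x - z‖ ^ 2) := by
  have hdesc := apply_gradientStep_le_sub hf hlip x
  have hsupport := hconv.add_inner_gradient_le (hf x) z
  have hdist : ‖gradientStep f L x - z‖ ^ 2 =
      ‖x - z‖ ^ 2 - 2 / L * ⟪x - z, gradient f x⟫_ℝ + ‖gradient f x‖ ^ 2 / L ^ 2 := by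
    rw [gradientStep, sub_right_comm, norm_sub_sq_real, real_inner_smul_right, norm_smul,
      mul_pow, Real.norm_eq_abs, sq_abs]
    ring
  rw [← neg_sub x z, inner_neg_right, real_inner_comm] at hsupport
  have hgain : L / 2 * (‖x - z‖ ^ 2 - ‖gradientStep f L x - z‖ ^ 2) =
      ⟪x - z, gradient f x⟫_ℝ - ‖gradient f x‖ ^ 2 / (2 * L) := by
    rw [hdist]
    field_simp
    ring
  linarith

theorem stmt_16_general (n : ℕ) (f : EuclideanSpace ℝ (Fin n) → ℝ) (L : ℝ)
    (hL : 0 < L) (hconv : ConvexOn ℝ Set.univ f) (hf : Differentiable ℝ f)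
    (hlip : ∀ x y : EuclideanSpace ℝ (Fin n),
      ‖gradient f x - gradient f y‖ ≤ L * ‖x - y‖)
    (xstar : EuclideanSpace ℝ (Fin n))
    (x : ℕ → EuclideanSpace ℝ (Fin n))
    (hiter : ∀ k, x (k + 1) = x k - (1 / L) • gradient f (x k)) :
    ∀ k : ℕ, 1 ≤ k →
      f (x k) - f xstar ≤ L * ‖x 0 - xstar‖ ^ 2 / (2 * k) := by
  have hstep (k : ℕ) : x (k + 1) = gradientStep f L (x k) := hiter k
  have hanti : Antitone fun k => f (x k) - f xstar := antitone_nat_of_succ_le fun k => by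
    simpa [hstep k] using apply_gradientStep_le hf hlip hL.le (x k)
  intro k hk
  have hsum := hanti.nat_mul_add_le_of_le_sub (d := fun k => L / 2 * ‖x k - xstar‖ ^ 2)
    (fun k => by
      simpa [hstep k, mul_sub] using apply_gradientStep_sub_le hconv hf hlip hL.ne' (x k) xstar) k
  have hdist : 0 ≤ L / 2 * ‖x k - xstar‖ ^ 2 := by positivity
  rw [le_div_iff₀ (by positivity)]
  linarith

/-- O(1/k) rate of gradient descent: if `f` is convex and differentiable with
`L`-Lipschitz gradient, `x*` is a global minimizer, and
`x_{k+1} = x_k − (1/L)∇f(x_k)`, then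
`f(x_k) − f(x*) ≤ L‖x₀ − x*‖²/(2k)` for all `k ≥ 1`. -/
theorem stmt_16 (n : ℕ) (f : EuclideanSpace ℝ (Fin n) → ℝ) (L : ℝ)
    (hL : 0 < L) (hconv : ConvexOn ℝ Set.univ f) (hf : Differentiable ℝ f)
    (hlip : ∀ x y : EuclideanSpace ℝ (Fin n),
      ‖gradient f x - gradient f y‖ ≤ L * ‖x - y‖)
    (xstar : EuclideanSpace ℝ (Fin n)) (hmin : ∀ y, f xstar ≤ f y)
    (x : ℕ → EuclideanSpace ℝ (Fin n))
    (hiter : ∀ k, x (k + 1) = x k - (1 / L) • gradient f (x k)) :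
    ∀ k : ℕ, 1 ≤ k →
      f (x k) - f xstar ≤ L * ‖x 0 - xstar‖ ^ 2 / (2 * k) :=
  stmt_16_general n f L hL hconv hf hlip xstar x hiter
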